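/- Let n ≥ 4 and a > 1 + 1/n, and set Q_n(a;x) = ∫_a^x T_{n−1}(t) dt. At the points a_k = cos(kπ/(n−1)), k = 0, …, n−1, the values ρ(a_k) = T_{n−1}(a_k)/Q_n(a; a_k) satisfy ρ(a_k) = ±(−1)^k λ_k with λ_k > 0 and 2n/(T_n(a) − (n/(n−2))·T_{n−2}(a) + 2(n−1)/(n−2)) ≤ λ_k ≤ 2n/(T_n(a) − (n/(n−2))·T_{n−2}(a) − 2(n−1)/(n−2)). -/

import Mathlib

noncomputable def chebT (n : ℤ) (x : ℝ) : ℝ := (Polynomial.Chebyshev.T ℝ n).eval x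

open Polynomial Polynomial.Chebyshev in
lemma U_sub_U' (m : ℤ) : U ℝ m - U ℝ (m - 2) = 2 * T ℝ m := by
  rw [U_sub_two, T_eq_U_sub_X_mul_U]; ring

lemma chebT_rec (m : ℤ) (x : ℝ) : chebT (m+2) x = 2*x*chebT (m+1) x - chebT m x := by
  simp [chebT, Polynomial.Chebyshev.T_add_two]

lemma chebT_cos (m : ℤ) (θ : ℝ) : chebT m (Real.cos θ) = Real.cos (m * θ) :=
  Polynomial.Chebyshev.T_real_cos θ m

lemma chebT_one (m : ℤ) : chebT m 1 = 1 := by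
  have h := chebT_cos m 0
  simpa using h

lemma T_lower (m : ℕ) (x : ℝ) (hx : 1 ≤ x) :
    (2*(m:ℝ)+1)*(x-1) ≤ chebT ((m:ℤ)+1) x - chebT m x ∧
      1 + ((m:ℝ)+1)^2*(x-1) ≤ chebT ((m:ℤ)+1) x := by
  induction m with
  | zero =>
    have h0 : chebT 0 x = 1 := by simp [chebT]
    have h1 : chebT 1 x = x := by simp [chebT]
    constructor <;> simp [h0, h1] <;> nlinarith
  | succ m ih =>
    obtain ⟨h1, h2⟩ := ih
    have hr := chebT_rec m x
    have key : (2*(m:ℝ)+3)*(x-1) ≤ chebT ((m:ℤ)+2) x - chebT ((m:ℤ)+1) x := by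
      nlinarith [mul_le_mul_of_nonneg_left h2 (by linarith : (0:ℝ) ≤ x-1), sq_nonneg (x-1)]
    have key2 : 1 + ((m:ℝ)+2)^2*(x-1) ≤ chebT ((m:ℤ)+2) x := by nlinarith
    constructor
    · push_cast; convert key using 2 <;> push_cast <;> ring
    · push_cast; convert key2 using 2 <;> push_cast <;> ring

open Polynomial Polynomial.Chebyshev in
lemma deriv_P (n : ℕ) (hn : 4 ≤ n) :
    Polynomial.derivative (Polynomial.C ((2*(n:ℝ))⁻¹) * T ℝ (n:ℤ)
        - Polynomial.C ((2*((n:ℝ)-2))⁻¹) * T ℝ ((n:ℤ)-2)) = T ℝ ((n:ℤ)-1) := by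
  have hn0 : (n:ℝ) ≠ 0 := by
    have : (0:ℝ) < n := by exact_mod_cast (by omega : 0 < n)
    linarith
  have hn2 : (n:ℝ) - 2 ≠ 0 := by
    have : (4:ℝ) ≤ n := by exact_mod_cast hn
    linarith
  have hUU : U ℝ ((n:ℤ)-1) - U ℝ ((n:ℤ)-3) = 2 * T ℝ ((n:ℤ)-1) := by
    have h := U_sub_U' ((n:ℤ)-1)
    rwa [show (n:ℤ)-1-2 = (n:ℤ)-3 by ring] at h
  have h2C : ((2:ℝ[X])) = Polynomial.C (2:ℝ) := (map_ofNat Polynomial.C 2).symm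
  have hC1 : Polynomial.C ((2*(n:ℝ))⁻¹) * ((n:ℕ):ℝ[X]) = Polynomial.C (2⁻¹:ℝ) := by
    rw [← Polynomial.C_eq_natCast, ← Polynomial.C_mul]; congr 1; field_simp
  have hC2 : Polynomial.C ((2*((n:ℝ)-2))⁻¹) * (((n:ℕ):ℝ[X]) - 2) = Polynomial.C (2⁻¹:ℝ) := by
    rw [← Polynomial.C_eq_natCast, h2C, ← Polynomial.C_sub, ← Polynomial.C_mul]
    congr 1; field_simp
  have hhalf : Polynomial.C (2⁻¹:ℝ) * 2 = (1:ℝ[X]) := by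
    rw [h2C, ← Polynomial.C_mul]; norm_num
  simp only [derivative_sub, derivative_mul, derivative_C, zero_mul, zero_add,
    T_derivative_eq_U]
  rw [show (n:ℤ)-2-1 = (n:ℤ)-3 by ring]
  push_cast
  linear_combination U ℝ ((n:ℤ)-1) * hC1 - U ℝ ((n:ℤ)-3) * hC2
    + Polynomial.C (2⁻¹:ℝ) * hUU + T ℝ ((n:ℤ)-1) * hhalf

set_option maxHeartbeats 2000000 in
theorem stmt16 (n : ℕ) (hn : 4 ≤ n) (a : ℝ) (ha : 1 + 1 / n < a) :
    ∃ ε : ℝ, (ε = 1 ∨ ε = -1) ∧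
      ∀ k < n, ∃ lam : ℝ, 0 < lam ∧
        chebT ((n : ℤ) - 1) (Real.cos (k * Real.pi / (n - 1)))
            / (∫ t in a..(Real.cos (k * Real.pi / (n - 1))), chebT ((n : ℤ) - 1) t)
          = ε * (-1) ^ k * lam ∧
        2 * n / (chebT n a - (n / ((n : ℝ) - 2)) * chebT ((n : ℤ) - 2) a
            + 2 * ((n : ℝ) - 1) / ((n : ℝ) - 2)) ≤ lam ∧
        lam ≤ 2 * n / (chebT n a - (n / ((n : ℝ) - 2)) * chebT ((n : ℤ) - 2) a
            - 2 * ((n : ℝ) - 1) / ((n : ℝ) - 2)) := by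
  have hn4 : (4:ℝ) ≤ n := by exact_mod_cast hn
  have hnpos : (0:ℝ) < n := by linarith
  have hn2pos : (0:ℝ) < (n:ℝ) - 2 := by linarith
  have hn0 : (n:ℝ) ≠ 0 := ne_of_gt hnpos
  have hn2 : (n:ℝ) - 2 ≠ 0 := ne_of_gt hn2pos
  have ha1 : 1 < a := by
    have : 0 < 1/(n:ℝ) := by positivity
    linarith
  set P : Polynomial ℝ := Polynomial.C ((2*(n:ℝ))⁻¹) * Polynomial.Chebyshev.T ℝ (n:ℤ)
      - Polynomial.C ((2*((n:ℝ)-2))⁻¹) * Polynomial.Chebyshev.T ℝ ((n:ℤ)-2) with hPdef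
  have hd : Polynomial.derivative P = Polynomial.Chebyshev.T ℝ ((n:ℤ)-1) := deriv_P n hn
  have hint : ∀ x y : ℝ, (∫ t in x..y, chebT ((n:ℤ)-1) t) = P.eval y - P.eval x := by
    intro x y
    apply intervalIntegral.integral_eq_sub_of_hasDerivAt
    · intro t _
      have h := P.hasDerivAt t
      rw [hd] at h
      exact h
    · exact (Polynomial.continuous _).intervalIntegrable _ _
  have hPeval : ∀ x : ℝ, P.eval x
      = (2*(n:ℝ))⁻¹ * chebT (n:ℤ) x - (2*((n:ℝ)-2))⁻¹ * chebT ((n:ℤ)-2) x := by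
    rw [hPdef]
    intro x
    simp only [Polynomial.eval_sub, Polynomial.eval_mul, Polynomial.eval_C, chebT]
  clear_value P
  set s := a - 1 with hsdef
  clear_value s
  have hspos : 0 < s := by simp [hsdef]; linarith
  have hns : 1 < s * (n:ℝ) := by
    have h1 : 1/(n:ℝ) < s := by rw [hsdef]; linarith
    exact (div_lt_iff₀ hnpos).mp h1
  -- pointwise lower bound for T_{n-1}
  have hpoint : ∀ t ∈ Set.Icc (1:ℝ) a, 1 + ((n:ℝ)-1)^2*(t-1) ≤ chebT ((n:ℤ)-1) t := by
    intro t ht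
    have h := (T_lower (n-2) t ht.1).2
    have hc1 : ((n-2:ℕ):ℤ) + 1 = (n:ℤ) - 1 := by
      have : ((n-2:ℕ):ℤ) = (n:ℤ) - 2 := by
        push_cast [Nat.cast_sub (by omega : 2 ≤ n)]; ring
      omega
    have hc2 : ((n-2:ℕ):ℝ) + 1 = (n:ℝ) - 1 := by
      push_cast [Nat.cast_sub (by omega : 2 ≤ n)]; ring
    rw [hc1, hc2] at h
    exact h
  have hF : ∀ t:ℝ, HasDerivAt (fun u : ℝ => u + ((n:ℝ)-1)^2/2*(u-1)^2)
      (1 + ((n:ℝ)-1)^2*(t-1)) t := by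
    intro t
    have h1 : HasDerivAt (fun u:ℝ => u) 1 t := hasDerivAt_id t
    have h2 : HasDerivAt (fun u:ℝ => (u-1)^2) (2*(t-1)) t := by
      have h := (hasDerivAt_pow 2 (t-1)).comp t ((hasDerivAt_id t).sub_const 1)
      exact h.congr_deriv (by norm_num)
    have h3 := h2.const_mul (((n:ℝ)-1)^2/2)
    have h4 := h1.add h3
    exact h4.congr_deriv (by ring)
  have hlin : (∫ t in (1:ℝ)..a, (1 + ((n:ℝ)-1)^2*(t-1)))
      = s + ((n:ℝ)-1)^2/2*s^2 := by
    rw [intervalIntegral.integral_eq_sub_of_hasDerivAt (fun t _ => hF t)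
      (Continuous.intervalIntegrable (by continuity) _ _)]
    simp [hsdef]; ring
  have hmono : (∫ t in (1:ℝ)..a, (1 + ((n:ℝ)-1)^2*(t-1)))
      ≤ ∫ t in (1:ℝ)..a, chebT ((n:ℤ)-1) t := by
    apply intervalIntegral.integral_mono_on (le_of_lt ha1)
      (Continuous.intervalIntegrable (by continuity) _ _)
      ((Polynomial.continuous _).intervalIntegrable _ _) hpoint
  have hJ : s + ((n:ℝ)-1)^2/2*s^2 ≤ P.eval a - P.eval 1 := by
    rw [← hlin, ← hint 1 a]; exact hmono
  have hP1 : P.eval 1 = (2*(n:ℝ))⁻¹ - (2*((n:ℝ)-2))⁻¹ := by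
    rw [hPeval, chebT_one, chebT_one]; ring
  -- key numeric bound
  have hPa : (2*(n:ℝ))⁻¹ - (2*((n:ℝ)-2))⁻¹ + s + ((n:ℝ)-1)^2/2*s^2 ≤ P.eval a := by
    rw [← hP1]; linarith
  have hq : ((2*(n:ℝ))⁻¹ - (2*((n:ℝ)-2))⁻¹) * (2*(n:ℝ)*((n:ℝ)-2)) = -2 := by
    field_simp
    ring
  have hKeyC : 2*((n:ℝ)-1) < 2*(n:ℝ)*P.eval a*((n:ℝ)-2) := by
    have hmul := mul_le_mul_of_nonneg_right hPa
      (by positivity : (0:ℝ) ≤ 2*(n:ℝ)*((n:ℝ)-2))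
    have hD0 : 0 ≤ ((n:ℝ)-2)*((n:ℝ)-1)^2 - 4*(n:ℝ) := by
      nlinarith [mul_nonneg (mul_nonneg (by linarith : (0:ℝ) ≤ (n:ℝ)) (by linarith : (0:ℝ) ≤ (n:ℝ))) (by linarith : (0:ℝ) ≤ (n:ℝ)-4)]
    have hA : 4*(n:ℝ)*s ≤ ((n:ℝ)-2)*((n:ℝ)-1)^2*s := by
      nlinarith [mul_nonneg hD0 hspos.le]
    have hB : (4:ℝ) < 4*(n:ℝ)*s := by nlinarith [hns]
    have hC : 2*((n:ℝ)-2) ≤ 2*(n:ℝ)*((n:ℝ)-2)*s := by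
      nlinarith [mul_nonneg (by linarith : (0:ℝ) ≤ 2*((n:ℝ)-2)) (by linarith : (0:ℝ) ≤ s*(n:ℝ) - 1)]
    have hE : ((n:ℝ)-2)*((n:ℝ)-1)^2*s ≤ (n:ℝ)*((n:ℝ)-2)*((n:ℝ)-1)^2*s^2 := by
      nlinarith [mul_nonneg (mul_nonneg (mul_nonneg hn2pos.le (sq_nonneg ((n:ℝ)-1))) hspos.le) (by linarith : (0:ℝ) ≤ s*(n:ℝ) - 1)]
    linarith [hmul, hq, hA, hB, hC, hE]
  refine ⟨-1, Or.inr rfl, ?_⟩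
  intro k hk
  set θ := (k:ℝ)*Real.pi/((n:ℝ)-1) with hθ
  set c := Real.cos θ with hc
  set e := ((-1:ℝ))^k with he
  have hn1 : (n:ℝ) - 1 ≠ 0 := by linarith
  have hcospi : Real.cos ((k:ℝ)*Real.pi) = e := by
    have h := Real.cos_nat_mul_pi_sub 0 k
    simpa [he] using h
  have hsinpi : Real.sin ((k:ℝ)*Real.pi) = 0 := Real.sin_nat_mul_pi k
  have hcheb1 : chebT ((n:ℤ)-1) c = e := by
    rw [hc, chebT_cos]
    rw [show (((n:ℤ)-1 : ℤ):ℝ) * θ = (k:ℝ)*Real.pi by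
      rw [hθ]; push_cast; field_simp]
    exact hcospi
  have hchebn : chebT (n:ℤ) c = e * c := by
    rw [hc, chebT_cos]
    rw [show (((n:ℤ) : ℤ):ℝ) * θ = (k:ℝ)*Real.pi - (-θ) by
      rw [hθ]; push_cast; field_simp; ring]
    rw [Real.cos_nat_mul_pi_sub, Real.cos_neg, ← he, ← hc]
  have hchebn2 : chebT ((n:ℤ)-2) c = e * c := by
    rw [hc, chebT_cos]
    rw [show (((n:ℤ)-2 : ℤ):ℝ) * θ = (k:ℝ)*Real.pi - θ by
      rw [hθ]; push_cast; field_simp; ring]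
    rw [Real.cos_nat_mul_pi_sub, ← he, ← hc]
  have hPc : P.eval c = -(e*c)/((n:ℝ)*((n:ℝ)-2)) := by
    rw [hPeval, hchebn, hchebn2]
    field_simp
    ring
  set D := P.eval a + e*c/((n:ℝ)*((n:ℝ)-2)) with hDdef
  have hI : (∫ t in a..c, chebT ((n:ℤ)-1) t) = -D := by
    rw [hint, hPc, hDdef]; ring
  have hec1 : -1 ≤ e*c ∧ e*c ≤ 1 := by
    have h1 := Real.neg_one_le_cos θ
    have h2 := Real.cos_le_one θ
    rcases Nat.even_or_odd k with hpar | hpar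
    · rw [he, hpar.neg_one_pow]; constructor <;> simp [hc] <;> linarith
    · rw [he, hpar.neg_one_pow]; constructor <;> simp [hc] <;> linarith
  have hcancel : (n:ℝ)*((n:ℝ)-2)*(e*c/((n:ℝ)*((n:ℝ)-2))) = e*c := by
    field_simp
  have h2nD : 2*(n:ℝ)*((n:ℝ)-2)*D = 2*(n:ℝ)*P.eval a*((n:ℝ)-2) + 2*(e*c) := by
    rw [hDdef]; field_simp
  clear_value θ c e
  clear_value D
  have hDpos : 0 < D := by
    have hprod : 0 < 2*(n:ℝ)*((n:ℝ)-2)*D := by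
      rw [h2nD]; nlinarith [hKeyC, hec1.1]
    by_contra hcon
    push_neg at hcon
    have : 2*(n:ℝ)*((n:ℝ)-2)*D ≤ 0 :=
      mul_nonpos_of_nonneg_of_nonpos (by positivity) hcon
    linarith
  have hD0 : D ≠ 0 := ne_of_gt hDpos
  set lam := 2*(n:ℝ)/(2*(n:ℝ)*D) with hlam
  have h2nDpos : 0 < 2*(n:ℝ)*D := by positivity
  have hlampos : 0 < lam := by rw [hlam]; positivity
  have hA2 : chebT (n:ℤ) a - ((n:ℝ)/((n:ℝ)-2))*chebT ((n:ℤ)-2) a = 2*(n:ℝ)*P.eval a := by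
    rw [hPeval]
    field_simp
  have hlamD : lam = 1/D := by
    rw [hlam]; field_simp
  clear_value lam
  refine ⟨lam, hlampos, ?_, ?_, ?_⟩
  · rw [hcheb1, hI, hlamD, div_neg]
    ring
  · rw [hA2]
    rw [hlam]
    apply div_le_div_of_nonneg_left (by positivity) h2nDpos
    have : 2*(n:ℝ)*D = 2*(n:ℝ)*P.eval a + 2*(e*c)/((n:ℝ)-2) := by
      rw [hDdef]; field_simp
    rw [this]
    have h1 : 2*(e*c)/((n:ℝ)-2) ≤ 2*((n:ℝ)-1)/((n:ℝ)-2) :=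
      div_le_div_of_nonneg_right (by nlinarith [hec1.2]) hn2pos.le
    exact add_le_add_right h1 _
  · rw [hA2, hlam]
    have hden : 0 < 2*(n:ℝ)*P.eval a - 2*((n:ℝ)-1)/((n:ℝ)-2) := by
      rw [sub_pos, div_lt_iff₀ hn2pos]
      linarith [hKeyC]
    apply div_le_div_of_nonneg_left (by positivity) hden
    have : 2*(n:ℝ)*D = 2*(n:ℝ)*P.eval a + 2*(e*c)/((n:ℝ)-2) := by
      rw [hDdef]; field_simp
    rw [this]
    have hab : -(2*((n:ℝ)-1)) ≤ 2*(e*c) := by nlinarith [hec1.1]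
    have h1 : -(2*((n:ℝ)-1))/((n:ℝ)-2) ≤ 2*(e*c)/((n:ℝ)-2) :=
      div_le_div_of_nonneg_right hab hn2pos.le
    rw [neg_div] at h1
    rw [sub_eq_add_neg]
    exact add_le_add_right h1 _
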